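/- arXiv:0711.1710 — 5 statements merged into one kernel-verified Lean document; each statement's English description precedes it below -/
import Mathlib

section
/- For every h > 0, the limit as (x,y) → (0,0) with 0 < x, y < h of the ratio p₂ʰ(1,y|x)/p₁(1,y|x) exists and equals ∑_{n∈ℤ} e^{−2h²n²}(1 − 4h²n²). -/
open MeasureTheory Filter Topology

/-- The one-dimensional heat kernel `p(t,y|x) = (2πt)^{-1/2} exp(-(y-x)²/(2t))`. -/
noncomputable def heatK (t y x : ℝ) : ℝ :=
  (2 * Real.pi * t) ^ (-(1 : ℝ) / 2) * Real.exp (-(y - x) ^ 2 / (2 * t))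

/-- Absorbing kernel with one wall at the origin. -/
noncomputable def pOne (t y x : ℝ) : ℝ := heatK t y x - heatK t y (-x)

/-- Absorbing kernel with two walls, at the origin and at `h`. -/
noncomputable def pTwo (h t y x : ℝ) : ℝ :=
  ∑' n : ℤ, (heatK t y (x + 2 * h * n) - heatK t y (-x + 2 * h * n))

/-!
Dividing the image series of `p₂ʰ(1,y|x)` by `p₁(1,y|x)` and pairing the images at `±2hn`, the
ratio becomes `∑_{n ∈ ℤ} e^{-c²/2} (cosh cx cosh cy - cosh xy · sinh cx sinh cy / sinh xy)` with
`c = 2hn`. Each term tends to `e^{-c²/2} (1 - c²)` as `(x, y) → 0` off the axes, and for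
`|x|, |y| ≤ 1` it is bounded by `(1 + e c²) e^{-c²/2 + 2|c|}`, which is summable over `n`; dominated
convergence (Tannery's theorem) gives the limit.
-/

open Real

lemma summable_abs_pow_mul_exp_neg_mul_sq_add_mul_abs (k : ℕ) {a : ℝ} (ha : 0 < a) (b : ℝ) :
    Summable fun n : ℤ => |(n : ℝ)| ^ k * exp (-a * n ^ 2 + b * |(n : ℝ)|) := by
  refine (summable_pow_mul_jacobiTheta₂_term_bound (b / (2 * π)) (div_pos ha pi_pos) k).congr
    fun n => ?_
  rw [Int.cast_abs]
  congr 2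
  field_simp
  ring

lemma summable_one_add_mul_sq_mul_exp (C b : ℝ) {a : ℝ} (ha : a ≠ 0) :
    Summable fun n : ℤ => (1 + C * (a * n) ^ 2) * exp (-(a * n) ^ 2 / 2 + b * |a * n|) := by
  have hS (k : ℕ) := summable_abs_pow_mul_exp_neg_mul_sq_add_mul_abs k
    (by positivity : 0 < a ^ 2 / 2) (b * |a|)
  refine ((hS 0).add ((hS 2).mul_left (C * a ^ 2))).congr fun n => ?_
  rw [sq_abs, abs_mul]
  ring_nf

lemma summable_heatK_add_mul_int {t a : ℝ} (ht : 0 < t) (ha : a ≠ 0) (x y : ℝ) :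
    Summable fun n : ℤ => heatK t y (x + a * n) := by
  have hb : Summable fun n : ℤ =>
      exp (-(a ^ 2 / (2 * t)) * n ^ 2 + |a| * |y - x| / t * |(n : ℝ)|) := by
    simpa using
      summable_abs_pow_mul_exp_neg_mul_sq_add_mul_abs 0 (by positivity) (|a| * |y - x| / t)
  refine (hb.mul_left ((2 * π * t) ^ (-(1 : ℝ) / 2))).of_nonneg_of_le
    (fun n => by unfold heatK; positivity) fun n => ?_
  refine mul_le_mul_of_nonneg_left (exp_le_exp.mpr ?_) (by positivity)
  have hcross : a * n * (y - x) ≤ |a| * |y - x| * |(n : ℝ)| := by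
    rw [mul_right_comm, ← abs_mul, ← abs_mul]
    exact le_abs_self _
  rw [div_le_iff₀ (by positivity)]
  field_simp
  nlinarith [sq_nonneg (y - x)]

lemma Real.cosh_le_exp_abs (t : ℝ) : cosh t ≤ exp |t| := by
  rw [← cosh_abs, cosh_eq]
  linarith [exp_le_exp.mpr (neg_le_self (abs_nonneg t))]

lemma Real.abs_sinh_le_abs_mul_exp_abs (t : ℝ) : |sinh t| ≤ |t| * exp |t| := by
  have h := add_one_le_exp (-2 * |t|)
  have h' : exp (-|t|) = exp |t| * exp (-2 * |t|) := by rw [← exp_add]; ring_nf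
  rw [abs_sinh, sinh_eq, h']
  nlinarith [exp_pos |t|]

/-- `symmetrizedTerm c x y = (f c + f (-c)) / (2 p₁(1,y|x))` with `f c = p(1,y|x+c) - p(1,y|-x+c)`
(see `heatK_image_pair_eq`). Each `f c / p₁` behaves like `1 - c / y` as `(x, y) → 0`; the
singular parts cancel in the symmetrization. -/
noncomputable def symmetrizedTerm (c x y : ℝ) : ℝ :=
  exp (-c ^ 2 / 2) *
    (cosh (c * x) * cosh (c * y) - cosh (x * y) * (sinh (c * x) * sinh (c * y) / sinh (x * y)))

lemma pOne_one_eq_mul_sinh (x y : ℝ) :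
    pOne 1 y x = 2 * ((2 * π * 1) ^ (-(1 : ℝ) / 2) * exp (-x ^ 2 / 2) * exp (-y ^ 2 / 2)) *
      sinh (x * y) := by
  have e1 : -(y - x) ^ 2 / (2 * 1) = -x ^ 2 / 2 + -y ^ 2 / 2 + x * y := by ring
  have e2 : -(y - -x) ^ 2 / (2 * 1) = -x ^ 2 / 2 + -y ^ 2 / 2 + -(x * y) := by ring
  simp only [pOne, heatK, e1, e2, exp_add, sinh_eq]
  ring

lemma heatK_image_pair_eq {x y : ℝ} (hxy : x * y ≠ 0) (c : ℝ) :
    heatK 1 y (x + c) - heatK 1 y (-x + c) + (heatK 1 y (x - c) - heatK 1 y (-x - c)) =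
      2 * symmetrizedTerm c x y * pOne 1 y x := by
  have hσ : symmetrizedTerm c x y * sinh (x * y) = exp (-c ^ 2 / 2) *
      (cosh (c * x) * cosh (c * y) * sinh (x * y) -
        cosh (x * y) * sinh (c * x) * sinh (c * y)) := by
    have hs : sinh (x * y) ≠ 0 := sinh_ne_zero.mpr hxy
    rw [symmetrizedTerm]
    field_simp
  have e1 : -(y - (x + c)) ^ 2 / (2 * 1) =
      -x ^ 2 / 2 + -y ^ 2 / 2 + -c ^ 2 / 2 + (x * y + c * y - c * x) := by ring
  have e2 : -(y - (-x + c)) ^ 2 / (2 * 1) =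
      -x ^ 2 / 2 + -y ^ 2 / 2 + -c ^ 2 / 2 + (-(x * y) + c * y + c * x) := by ring
  have e3 : -(y - (x - c)) ^ 2 / (2 * 1) =
      -x ^ 2 / 2 + -y ^ 2 / 2 + -c ^ 2 / 2 + (x * y - c * y + c * x) := by ring
  have e4 : -(y - (-x - c)) ^ 2 / (2 * 1) =
      -x ^ 2 / 2 + -y ^ 2 / 2 + -c ^ 2 / 2 + (-(x * y) - c * y - c * x) := by ring
  have hexp : heatK 1 y (x + c) - heatK 1 y (-x + c) + (heatK 1 y (x - c) - heatK 1 y (-x - c)) =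
      4 * ((2 * π * 1) ^ (-(1 : ℝ) / 2) * exp (-x ^ 2 / 2) * exp (-y ^ 2 / 2)) *
        (exp (-c ^ 2 / 2) * (cosh (c * x) * cosh (c * y) * sinh (x * y) -
          cosh (x * y) * sinh (c * x) * sinh (c * y))) := by
    simp only [heatK, e1, e2, e3, e4, sinh_eq, cosh_eq, exp_add, exp_sub, exp_neg]
    field_simp
    ring
  rw [hexp, ← hσ, pOne_one_eq_mul_sinh]
  ring

lemma pTwo_div_pOne_eq_tsum_symmetrizedTerm {h x y : ℝ} (hh : h ≠ 0) (hxy : x * y ≠ 0) :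
    pTwo h 1 y x / pOne 1 y x = ∑' n : ℤ, symmetrizedTerm (2 * h * n) x y := by
  set f : ℤ → ℝ := fun n => heatK 1 y (x + 2 * h * n) - heatK 1 y (-x + 2 * h * n)
  have h2h : 2 * h ≠ 0 := mul_ne_zero two_ne_zero hh
  have hf : Summable f := (summable_heatK_add_mul_int one_pos h2h x y).sub
    (summable_heatK_add_mul_int one_pos h2h (-x) y)
  have hp : pOne 1 y x ≠ 0 := by
    rw [pOne_one_eq_mul_sinh]
    exact mul_ne_zero (by positivity) (sinh_ne_zero.mpr hxy)
  have hpair (n : ℤ) : f n + f (-n) = 2 * symmetrizedTerm (2 * h * n) x y * pOne 1 y x := by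
    rw [← heatK_image_pair_eq hxy]
    simp only [f, Int.cast_neg, mul_neg, ← sub_eq_add_neg]
  have hneg : ∑' n, f (-n) = ∑' n, f n := (Equiv.neg ℤ).tsum_eq f
  have hfneg : Summable fun n => f (-n) := hf.comp_injective neg_injective
  calc pTwo h 1 y x / pOne 1 y x = (∑' n, f n + ∑' n, f (-n)) / (2 * pOne 1 y x) := by
        rw [hneg, pTwo]
        field_simp
        ring
    _ = ∑' n : ℤ, symmetrizedTerm (2 * h * n) x y := by
        rw [← hf.tsum_add hfneg, ← tsum_div_const]
        refine tsum_congr fun n => ?_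
        rw [hpair]
        field_simp

lemma abs_symmetrizedTerm_le (c : ℝ) {x y : ℝ} (hx : |x| ≤ 1) (hy : |y| ≤ 1) :
    |symmetrizedTerm c x y| ≤ (1 + exp 1 * c ^ 2) * exp (-c ^ 2 / 2 + 2 * |c|) := by
  have hcx : |c * x| ≤ |c| := by
    simpa [abs_mul] using mul_le_mul_of_nonneg_left hx (abs_nonneg c)
  have hcy : |c * y| ≤ |c| := by
    simpa [abs_mul] using mul_le_mul_of_nonneg_left hy (abs_nonneg c)
  have hxy : |x * y| ≤ 1 := by
    simpa [abs_mul] using mul_le_mul hx hy (abs_nonneg y) zero_le_one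
  have hcosh : cosh (c * x) * cosh (c * y) ≤ exp (2 * |c|) := by
    rw [two_mul, exp_add]
    exact mul_le_mul ((cosh_le_exp_abs _).trans (exp_le_exp.mpr hcx))
      ((cosh_le_exp_abs _).trans (exp_le_exp.mpr hcy)) (cosh_pos _).le (exp_pos _).le
  have hcosh' : cosh (x * y) ≤ exp 1 := (cosh_le_exp_abs _).trans (exp_le_exp.mpr hxy)
  have hsinh (z : ℝ) (hz : |z| ≤ 1) : |sinh (c * z)| ≤ |c| * exp |c| * |z| := by
    calc |sinh (c * z)| ≤ |c * z| * exp |c * z| := abs_sinh_le_abs_mul_exp_abs _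
      _ ≤ |c| * |z| * exp |c| := by
          rw [abs_mul]
          gcongr
          simpa [abs_mul] using mul_le_mul_of_nonneg_left hz (abs_nonneg c)
      _ = |c| * exp |c| * |z| := by ring
  have hratio : |sinh (c * x) * sinh (c * y) / sinh (x * y)| ≤ c ^ 2 * exp (2 * |c|) := by
    rw [abs_div]
    refine div_le_of_le_mul₀ (abs_nonneg _) (by positivity) ?_
    calc |sinh (c * x) * sinh (c * y)| ≤ (|c| * exp |c| * |x|) * (|c| * exp |c| * |y|) := by
          rw [abs_mul]
          exact mul_le_mul (hsinh x hx) (hsinh y hy) (abs_nonneg _) (by positivity)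
      _ = c ^ 2 * exp (2 * |c|) * |x * y| := by
          rw [two_mul, exp_add, abs_mul, ← sq_abs c]
          ring
      _ ≤ c ^ 2 * exp (2 * |c|) * |sinh (x * y)| := by
          rw [abs_sinh]
          gcongr
          exact self_le_sinh_iff.mpr (abs_nonneg _)
  rw [symmetrizedTerm, abs_mul, abs_of_pos (exp_pos _), exp_add, mul_comm (1 + _), mul_assoc]
  gcongr
  calc |cosh (c * x) * cosh (c * y) - cosh (x * y) * (sinh (c * x) * sinh (c * y) / sinh (x * y))|
      ≤ |cosh (c * x) * cosh (c * y)| +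
          |cosh (x * y)| * |sinh (c * x) * sinh (c * y) / sinh (x * y)| := by
        rw [← abs_mul]
        exact abs_sub _ _
    _ ≤ exp (2 * |c|) + exp 1 * (c ^ 2 * exp (2 * |c|)) := by
        rw [abs_of_pos (mul_pos (cosh_pos _) (cosh_pos _)), abs_of_pos (cosh_pos _)]
        gcongr
    _ = exp (2 * |c|) * (1 + exp 1 * c ^ 2) := by ring

lemma tendsto_sinh_mul_div_self (c : ℝ) : Tendsto (fun t => sinh (c * t) / t) (𝓝[≠] 0) (𝓝 c) := by
  have hderiv : HasDerivAt (fun t => sinh (c * t)) c 0 := by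
    simpa using ((hasDerivAt_id (0 : ℝ)).const_mul c).sinh
  refine (hasDerivAt_iff_tendsto_slope.mp hderiv).congr fun t => ?_
  simp [slope_def_field, div_eq_inv_mul]

lemma tendsto_symmetrizedTerm (c : ℝ) :
    Tendsto (fun q : ℝ × ℝ => symmetrizedTerm c q.1 q.2)
      (𝓝[{q | q.1 ≠ 0 ∧ q.2 ≠ 0}] (0, 0)) (𝓝 (exp (-c ^ 2 / 2) * (1 - c ^ 2))) := by
  set L := 𝓝[{q : ℝ × ℝ | q.1 ≠ 0 ∧ q.2 ≠ 0}] (0, 0)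
  have hoff : ∀ᶠ q in L, q.1 ≠ 0 ∧ q.2 ≠ 0 := self_mem_nhdsWithin
  have hpunct {f : ℝ × ℝ → ℝ} (hf : Continuous f) (hf0 : f (0, 0) = 0)
      (hne : ∀ q : ℝ × ℝ, q.1 ≠ 0 ∧ q.2 ≠ 0 → f q ≠ 0) : Tendsto f L (𝓝[≠] 0) :=
    tendsto_nhdsWithin_iff.mpr ⟨(hf.tendsto' _ _ hf0).mono_left nhdsWithin_le_nhds,
      hoff.mono fun q hq => hne q hq⟩
  have hx := hpunct (f := fun q => q.1) continuous_fst rfl fun q hq => hq.1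
  have hy := hpunct (f := fun q => q.2) continuous_snd rfl fun q hq => hq.2
  have hxy := hpunct (f := fun q => q.1 * q.2) (continuous_fst.mul continuous_snd) (mul_zero 0)
    fun q hq => mul_ne_zero hq.1 hq.2
  have hcosh {f : ℝ × ℝ → ℝ} (hf : Continuous f) (hf0 : f (0, 0) = 0) :
      Tendsto (fun q => cosh (f q)) L (𝓝 1) := by
    simpa [hf0, Function.comp_def] using
      ((continuous_cosh.comp hf).tendsto (0, 0)).mono_left nhdsWithin_le_nhds
  have hlim := (tendsto_const_nhds (x := exp (-c ^ 2 / 2))).mul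
    (((hcosh (f := fun q => c * q.1) (continuous_const.mul continuous_fst) (mul_zero c)).mul
      (hcosh (f := fun q => c * q.2) (continuous_const.mul continuous_snd) (mul_zero c))).sub
      ((hcosh (f := fun q => q.1 * q.2) (continuous_fst.mul continuous_snd) (mul_zero 0)).mul
      (((tendsto_sinh_mul_div_self c).comp hx).mul ((tendsto_sinh_mul_div_self c).comp hy) |>.div
        (by simpa using (tendsto_sinh_mul_div_self 1).comp hxy) one_ne_zero)))
  rw [show (1 : ℝ) * 1 - 1 * (c * c / 1) = 1 - c ^ 2 by ring] at hlim
  refine hlim.congr' (hoff.mono fun q hq => ?_)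
  have hs : sinh (q.1 * q.2) ≠ 0 := sinh_ne_zero.mpr (mul_ne_zero hq.1 hq.2)
  simp only [Function.comp_apply, Pi.div_apply, symmetrizedTerm]
  field_simp [hq.1, hq.2]

theorem tendsto_pTwo_div_pOne_off_axes {h : ℝ} (hh : h ≠ 0) :
    Tendsto (fun q : ℝ × ℝ => pTwo h 1 q.2 q.1 / pOne 1 q.2 q.1)
      (𝓝[{q | q.1 ≠ 0 ∧ q.2 ≠ 0}] (0, 0))
      (𝓝 (∑' n : ℤ, exp (-(2 * h * n) ^ 2 / 2) * (1 - (2 * h * n) ^ 2))) := by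
  have hoff : ∀ᶠ q in 𝓝[{q : ℝ × ℝ | q.1 ≠ 0 ∧ q.2 ≠ 0}] (0, 0), q.1 ≠ 0 ∧ q.2 ≠ 0 :=
    self_mem_nhdsWithin
  have hnear : ∀ᶠ q in 𝓝[{q : ℝ × ℝ | q.1 ≠ 0 ∧ q.2 ≠ 0}] (0, 0), |q.1| ≤ 1 ∧ |q.2| ≤ 1 := by
    filter_upwards [nhdsWithin_le_nhds (Metric.closedBall_mem_nhds (0 : ℝ × ℝ) one_pos)] with q hq
    simpa [Prod.norm_def] using hq
  refine (tendsto_tsum_of_dominated_convergence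
      (summable_one_add_mul_sq_mul_exp (exp 1) 2 (mul_ne_zero two_ne_zero hh))
      (fun n => tendsto_symmetrizedTerm _)
      (hnear.mono fun q hq n => abs_symmetrizedTerm_le _ hq.1 hq.2)).congr' ?_
  filter_upwards [hoff] with q hq
  exact (pTwo_div_pOne_eq_tsum_symmetrizedTerm hh (mul_ne_zero hq.1 hq.2)).symm

/-- For every `h > 0`, the limit of `p₂ʰ(1,y|x)/p₁(1,y|x)` as `(x,y) → (0,0)`
with `0 < x < h`, `0 < y < h`, exists and equals
`∑_{n ∈ ℤ} e^{-2h²n²} (1 - 4h²n²)`. -/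
theorem limit_ratio_pTwo_pOne (h : ℝ) (hh : 0 < h) :
    Tendsto (fun q : ℝ × ℝ => pTwo h 1 q.2 q.1 / pOne 1 q.2 q.1)
      (𝓝[{q : ℝ × ℝ | 0 < q.1 ∧ q.1 < h ∧ 0 < q.2 ∧ q.2 < h}] (0, 0))
      (𝓝 (∑' n : ℤ, Real.exp (-2 * h ^ 2 * (n : ℝ) ^ 2) * (1 - 4 * h ^ 2 * (n : ℝ) ^ 2))) := by
  have hlimit : ∑' n : ℤ, exp (-(2 * h * n) ^ 2 / 2) * (1 - (2 * h * n) ^ 2) =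
      ∑' n : ℤ, exp (-2 * h ^ 2 * (n : ℝ) ^ 2) * (1 - 4 * h ^ 2 * (n : ℝ) ^ 2) :=
    tsum_congr fun n => by ring_nf
  rw [← hlimit]
  exact (tendsto_pTwo_div_pOne_off_axes hh.ne').mono_left
    (nhdsWithin_mono _ fun q hq => ⟨hq.1.ne', hq.2.2.1.ne'⟩)
end

section
/- For every real s > 2, Z(8,0; 4+s/2) + 12 Z(6,2; 4+s/2) − 5 Z(4,4; 4+s/2) = (1/2) Z(0,0; s/2) + 4 Z(2,2; 2+s/2) − 16 Z(4,4; 4+s/2). -/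
/-!
Writing `q = x² + y²`, the polynomial identity
`(x⁸ + y⁸)/2 + 6(x⁶y² + x²y⁶) + 11x⁴y⁴ = q⁴/2 + 4x²y²q²`, divided by `q^(4 + s/2)`, relates the
summands of the series termwise; all series converge absolutely for `s > 2` (the summands are
`O(‖n‖^(-s))`), so the relation passes to the sums. Symmetrising with `Z(α,β;γ) = Z(β,α;γ)` turns
the left-hand side into `Z(8,0) + 12 Z(6,2) + 11 Z(4,4)`.
-/

/-- The double Dirichlet series
`Z(α,β;γ) = ∑_{(n₁,n₂)∈ℤ²∖{(0,0)}} n₁^α n₂^β / (n₁²+n₂²)^γ`. -/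
noncomputable def Zdd (α β : ℕ) (γ : ℝ) : ℝ :=
  ∑' n : {p : ℤ × ℤ // p ≠ (0, 0)},
    ((n.1.1 : ℝ) ^ α * (n.1.2 : ℝ) ^ β) / ((n.1.1 : ℝ) ^ 2 + (n.1.2 : ℝ) ^ 2) ^ γ

open Real

noncomputable def zddTerm (α β : ℕ) (γ : ℝ) (p : ℤ × ℤ) : ℝ :=
  ((p.1 : ℝ) ^ α * (p.2 : ℝ) ^ β) / ((p.1 : ℝ) ^ 2 + (p.2 : ℝ) ^ 2) ^ γ

lemma summable_int_prod_norm_rpow {r : ℝ} (hr : r < -2) :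
    Summable fun p : ℤ × ℤ => ‖p‖ ^ r := by
  have h := EisensteinSeries.summable_one_div_norm_rpow (k := -r) (by linarith)
  rw [neg_neg, ← (finTwoArrowEquiv ℤ).symm.summable_iff] at h
  refine h.congr fun p => ?_
  simp [EisensteinSeries.norm_eq_max_natAbs, Prod.norm_def, Int.norm_eq_abs]

lemma int_prod_sq_norm_le (p : ℤ × ℤ) : ‖p‖ ^ 2 ≤ (p.1 : ℝ) ^ 2 + (p.2 : ℝ) ^ 2 := by
  rw [Prod.norm_def, Int.norm_eq_abs, Int.norm_eq_abs]
  rcases le_total |(p.1 : ℝ)| |(p.2 : ℝ)| with h | h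
  · rw [max_eq_right h, sq_abs]; nlinarith
  · rw [max_eq_left h, sq_abs]; nlinarith

lemma int_prod_sq_add_sq_pos {p : ℤ × ℤ} (hp : p ≠ 0) : 0 < (p.1 : ℝ) ^ 2 + (p.2 : ℝ) ^ 2 :=
  (pow_pos (norm_pos_iff.mpr hp) 2).trans_le (int_prod_sq_norm_le p)

lemma norm_zddTerm_le (α β : ℕ) {γ : ℝ} (hγ : 0 ≤ γ) {p : ℤ × ℤ} (hp : p ≠ 0) :
    ‖zddTerm α β γ p‖ ≤ ‖p‖ ^ ((α : ℝ) + β - 2 * γ) := by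
  have hN : 0 < ‖p‖ := norm_pos_iff.mpr hp
  have h₁ : |(p.1 : ℝ)| ≤ ‖p‖ := by rw [← Int.norm_eq_abs]; exact norm_fst_le p
  have h₂ : |(p.2 : ℝ)| ≤ ‖p‖ := by rw [← Int.norm_eq_abs]; exact norm_snd_le p
  calc ‖zddTerm α β γ p‖
      = |(p.1 : ℝ)| ^ α * |(p.2 : ℝ)| ^ β / ((p.1 : ℝ) ^ 2 + (p.2 : ℝ) ^ 2) ^ γ := by
        rw [zddTerm, Real.norm_eq_abs, abs_div, abs_mul, abs_pow, abs_pow,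
          abs_of_nonneg (rpow_nonneg (by positivity) γ)]
    _ ≤ ‖p‖ ^ α * ‖p‖ ^ β / (‖p‖ ^ 2) ^ γ := by
        gcongr
        exact int_prod_sq_norm_le p
    _ = ‖p‖ ^ ((α : ℝ) + β - 2 * γ) := by
        rw [rpow_sub hN, rpow_add hN, rpow_natCast, rpow_natCast, rpow_mul hN.le,
          ← rpow_natCast ‖p‖ 2, Nat.cast_ofNat]

lemma hasSum_Zdd (α β : ℕ) (γ : ℝ) (h : (α : ℝ) + β + 2 < 2 * γ) :
    HasSum (fun n : {p : ℤ × ℤ // p ≠ (0, 0)} => zddTerm α β γ n) (Zdd α β γ) := by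
  have hγ : 0 ≤ γ := by linarith [(α.cast_nonneg : (0 : ℝ) ≤ α), (β.cast_nonneg : (0 : ℝ) ≤ β)]
  have hr : (α : ℝ) + β - 2 * γ < -2 := by linarith
  exact Summable.hasSum <| .of_norm_bounded ((summable_int_prod_norm_rpow hr).subtype _)
    fun n => norm_zddTerm_le α β hγ (Prod.mk_zero_zero (M := ℤ) (N := ℤ) ▸ n.2)

lemma zddTerm_swap (α β : ℕ) (γ : ℝ) (p : ℤ × ℤ) : zddTerm β α γ p.swap = zddTerm α β γ p := by
  simp only [zddTerm, Prod.fst_swap, Prod.snd_swap, mul_comm, add_comm]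

lemma Zdd_comm (α β : ℕ) (γ : ℝ) : Zdd α β γ = Zdd β α γ := by
  let e : {p : ℤ × ℤ // p ≠ (0, 0)} ≃ {p : ℤ × ℤ // p ≠ (0, 0)} :=
    (Equiv.prodComm ℤ ℤ).subtypeEquiv fun p => by simp [Prod.swap_eq_iff_eq_swap]
  calc Zdd α β γ = ∑' n, zddTerm β α γ (e n) := tsum_congr fun n => (zddTerm_swap α β γ n).symm
    _ = Zdd β α γ := e.tsum_eq fun n => zddTerm β α γ n

lemma zddTerm_deg8_relation {p : ℤ × ℤ} (hp : p ≠ 0) (σ : ℝ) :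
    (1 / 2) * zddTerm 8 0 (4 + σ) p + (1 / 2) * zddTerm 0 8 (4 + σ) p
        + 6 * zddTerm 6 2 (4 + σ) p + 6 * zddTerm 2 6 (4 + σ) p + 11 * zddTerm 4 4 (4 + σ) p
      = (1 / 2) * zddTerm 0 0 σ p + 4 * zddTerm 2 2 (2 + σ) p := by
  have hq := int_prod_sq_add_sq_pos hp
  have hqσ := rpow_pos_of_pos hq σ
  simp only [zddTerm, rpow_add hq, rpow_ofNat]
  field_simp
  ring

/-- For every real `s > 2`,
`Z(8,0;4+s/2) + 12 Z(6,2;4+s/2) - 5 Z(4,4;4+s/2)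
  = (1/2) Z(0,0;s/2) + 4 Z(2,2;2+s/2) - 16 Z(4,4;4+s/2)`. -/
theorem Zdd_reduction_deg8 (s : ℝ) (hs : 2 < s) :
    Zdd 8 0 (4 + s / 2) + 12 * Zdd 6 2 (4 + s / 2) - 5 * Zdd 4 4 (4 + s / 2)
      = (1 / 2) * Zdd 0 0 (s / 2) + 4 * Zdd 2 2 (2 + s / 2) - 16 * Zdd 4 4 (4 + s / 2) := by
  have h80 := hasSum_Zdd 8 0 (4 + s / 2) (by push_cast; linarith)
  have h08 := hasSum_Zdd 0 8 (4 + s / 2) (by push_cast; linarith)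
  have h62 := hasSum_Zdd 6 2 (4 + s / 2) (by push_cast; linarith)
  have h26 := hasSum_Zdd 2 6 (4 + s / 2) (by push_cast; linarith)
  have h44 := hasSum_Zdd 4 4 (4 + s / 2) (by push_cast; linarith)
  have h00 := hasSum_Zdd 0 0 (s / 2) (by push_cast; linarith)
  have h22 := hasSum_Zdd 2 2 (2 + s / 2) (by push_cast; linarith)
  have lhs := ((((h80.mul_left (1 / 2)).add (h08.mul_left (1 / 2))).add (h62.mul_left 6)).add
    (h26.mul_left 6)).add (h44.mul_left 11)
  have rhs := ((h00.mul_left (1 / 2)).add (h22.mul_left 4)).congr_fun fun n =>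
    zddTerm_deg8_relation (Prod.mk_zero_zero (M := ℤ) (N := ℤ) ▸ n.2) (s / 2)
  have key := lhs.unique rhs
  rw [Zdd_comm 0 8, Zdd_comm 2 6] at key
  linarith
end

section
/- Let b be a nonnegative integer and let a > 1 be real. Then Γ(a+2b) Z(2b, 2b; a+2b) = π^a ∫₀^∞ u^{a+2b−1} ( (θ^{(b)}(u))² − 𝟙{b=0} ) du, where θ^{(b)} denotes the b-th derivative of the Jacobi theta function θ, and 𝟙{b=0} equals 1 if b = 0 and 0 otherwise. -/
open MeasureTheory

/-- The Jacobi theta function `θ(u) = ∑_{n∈ℤ} e^{-πn²u}`. -/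
noncomputable def jTheta (u : ℝ) : ℝ := ∑' n : ℤ, Real.exp (-Real.pi * (n : ℝ) ^ 2 * u)

/-!
Termwise differentiation gives `θ^{(b)}(u) = ∑ₙ (-πn²)^b e^{-πn²u}`, so `(θ^{(b)}(u))²` is
the double series `∑_{(m,n)} (π²m²n²)^b e^{-π(m²+n²)u}`, whose `(0,0)` term is `𝟙{b=0}`.
With `s = a + 2b`, the Mellin transform `∫₀^∞ u^{s-1} e^{-cu} du = Γ(s) c^{-s}` sends each
remaining term to `π^{2b-s} Γ(s) m^{2b} n^{2b} / (m²+n²)^s`, and `π^{2b-s} = π^{-a}`.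
The terms are nonnegative and their integrals sum to `π^{-a} Γ(s) Z(2b,2b;s)`, which converges
because `2s - 4b = 2a > 2`; this justifies exchanging the sum and the integral.
-/

open Real Set

noncomputable def thetaTerm (b : ℕ) (x u : ℝ) : ℝ := (-π * x ^ 2) ^ b * exp (-π * x ^ 2 * u)

lemma hasDerivAt_thetaTerm (b : ℕ) (x u : ℝ) :
    HasDerivAt (thetaTerm b x) (thetaTerm (b + 1) x u) u := by
  have h := (((hasDerivAt_id u).const_mul (-π * x ^ 2)).exp).const_mul ((-π * x ^ 2) ^ b)
  exact h.congr_deriv (by simp only [thetaTerm, id, pow_succ]; ring)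

lemma norm_thetaTerm_le (b : ℕ) (n : ℤ) {T u : ℝ} (hTu : T ≤ u) :
    ‖thetaTerm b n u‖ ≤ π ^ b * (|(n : ℝ)| ^ (2 * b) * exp (-π * (T * n ^ 2))) := by
  rw [thetaTerm, norm_mul, norm_pow, Real.norm_of_nonneg (exp_pos _).le, norm_mul, norm_neg,
    Real.norm_of_nonneg pi_pos.le, norm_pow, Real.norm_eq_abs, mul_pow, pow_mul, sq_abs, mul_assoc]
  gcongr _ * (_ * exp ?_)
  nlinarith [mul_nonneg (mul_nonneg pi_pos.le (sq_nonneg (n : ℝ))) (sub_nonneg.2 hTu)]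

lemma summable_thetaTerm_bound (b : ℕ) {T : ℝ} (hT : 0 < T) :
    Summable fun n : ℤ => π ^ b * (|(n : ℝ)| ^ (2 * b) * exp (-π * (T * n ^ 2))) := by
  simpa using (summable_pow_mul_jacobiTheta₂_term_bound 0 hT (2 * b)).mul_left (π ^ b)

lemma summable_norm_thetaTerm (b : ℕ) {u : ℝ} (hu : 0 < u) :
    Summable fun n : ℤ => ‖thetaTerm b n u‖ :=
  (summable_thetaTerm_bound b hu).of_nonneg_of_le (fun _ => norm_nonneg _)
    fun n => norm_thetaTerm_le b n le_rfl

theorem iteratedDeriv_jTheta (b : ℕ) {u : ℝ} (hu : 0 < u) :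
    iteratedDeriv b jTheta u = ∑' n : ℤ, thetaTerm b n u := by
  induction b generalizing u with
  | zero => simp [jTheta, thetaTerm]
  | succ b ih =>
    rw [iteratedDeriv_succ,
      (Filter.eventuallyEq_of_mem (Ioi_mem_nhds hu) fun y hy => ih hy).deriv_eq]
    -- the derivatives are dominated uniformly on `(u/2, ∞)`
    exact (hasDerivAt_tsum_of_isPreconnected (summable_thetaTerm_bound (b + 1) (half_pos hu))
      isOpen_Ioi isPreconnected_Ioi (fun n y _ => hasDerivAt_thetaTerm b n y)
      (fun n y hy => norm_thetaTerm_le (b + 1) n (le_of_lt hy)) (half_lt_self hu)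
      (summable_norm_thetaTerm b hu).of_norm (half_lt_self hu)).deriv

theorem tsum_sq_sub_sq_eq_tsum_ne {ι R : Type*} [NormedRing R] [CompleteSpace R]
    {f : ι → R} (hf : Summable fun i => ‖f i‖) (i₀ : ι) :
    (∑' i, f i) ^ 2 - f i₀ ^ 2
      = ∑' p : {p : ι × ι // p ≠ (i₀, i₀)}, f p.1.1 * f p.1.2 := by
  rw [sq, sq, tsum_mul_tsum_of_summable_norm hf hf, sub_eq_iff_eq_add',
    ← (summable_mul_of_summable_norm hf hf).tsum_subtype_add_tsum_subtype_compl {(i₀, i₀)},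
    tsum_singleton (i₀, i₀) fun p : ι × ι => f p.1 * f p.2]
  rfl

lemma thetaTerm_zero_sq (b : ℕ) (u : ℝ) : thetaTerm b 0 u ^ 2 = if b = 0 then 1 else 0 := by
  rcases eq_or_ne b 0 with rfl | hb <;> simp [thetaTerm, *]

lemma thetaTerm_mul_thetaTerm (b : ℕ) (x y u : ℝ) :
    thetaTerm b x u * thetaTerm b y u
      = π ^ (2 * b) * (x ^ (2 * b) * y ^ (2 * b)) * exp (-(π * (x ^ 2 + y ^ 2) * u)) := by
  rw [thetaTerm, thetaTerm, mul_mul_mul_comm, ← mul_pow, ← exp_add, pow_mul, pow_mul, pow_mul,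
    ← mul_pow, ← mul_pow]
  congr 2 <;> ring

section Mellin

variable (b : ℕ) {s : ℝ} (hs : 0 < s) {x y : ℝ} (hxy : 0 < x ^ 2 + y ^ 2)
include hs hxy

lemma integrableOn_rpow_mul_thetaTerm_mul_thetaTerm :
    IntegrableOn (fun u => u ^ (s - 1) * (thetaTerm b x u * thetaTerm b y u)) (Ioi 0) := by
  have h := (integrableOn_rpow_mul_exp_neg_mul_rpow (by linarith : (-1 : ℝ) < s - 1)
    zero_lt_one (mul_pos pi_pos hxy)).const_mul (π ^ (2 * b) * (x ^ (2 * b) * y ^ (2 * b)))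
  refine IntegrableOn.congr_fun h (fun u _ => ?_) measurableSet_Ioi
  simp only [thetaTerm_mul_thetaTerm, rpow_one, neg_mul]
  ring

lemma integral_rpow_mul_thetaTerm_mul_thetaTerm :
    ∫ u in Ioi 0, u ^ (s - 1) * (thetaTerm b x u * thetaTerm b y u)
      = π ^ (2 * (b : ℝ) - s) * Gamma s * (x ^ (2 * b) * y ^ (2 * b) / (x ^ 2 + y ^ 2) ^ s) := by
  simp_rw [thetaTerm_mul_thetaTerm, mul_left_comm _ (π ^ (2 * b) * _), integral_const_mul,
    integral_rpow_mul_exp_neg_mul_Ioi hs (mul_pos pi_pos hxy), one_div,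
    inv_rpow (mul_pos pi_pos hxy).le, mul_rpow pi_pos.le hxy.le, rpow_sub pi_pos, ← rpow_natCast]
  push_cast
  field_simp

end Mellin

lemma summable_norm_rpow_neg_int_prod {k : ℝ} (hk : 2 < k) :
    Summable fun p : ℤ × ℤ => ‖p‖ ^ (-k) := by
  refine ((finTwoArrowEquiv ℤ).symm.summable_iff.mpr
    (EisensteinSeries.summable_one_div_norm_rpow hk)).congr fun p => ?_
  simp [EisensteinSeries.norm_eq_max_natAbs, Prod.norm_def, Int.norm_eq_abs]

lemma summable_Zdd_term {α β : ℕ} {γ : ℝ} (h : α + β + 2 < 2 * γ) :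
    Summable fun n : {p : ℤ × ℤ // p ≠ (0, 0)} =>
      ((n.1.1 : ℝ) ^ α * (n.1.2 : ℝ) ^ β) / ((n.1.1 : ℝ) ^ 2 + (n.1.2 : ℝ) ^ 2) ^ γ := by
  refine ((summable_norm_rpow_neg_int_prod (k := 2 * γ - α - β) (by linarith)).subtype _
    ).of_norm_bounded fun ⟨(x, y), hp⟩ => ?_
  set M := ‖(x, y)‖
  set r := √((x : ℝ) ^ 2 + (y : ℝ) ^ 2)
  have hM : 0 < M := norm_pos_iff.2 hp
  have hxr : |(x : ℝ)| ≤ r := abs_le_sqrt (le_add_of_nonneg_right (sq_nonneg _))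
  have hyr : |(y : ℝ)| ≤ r := abs_le_sqrt (le_add_of_nonneg_left (sq_nonneg _))
  have hMr : M ≤ r := by simpa [M, Prod.norm_def, Int.norm_eq_abs] using max_le hxr hyr
  have hr : 0 < r := hM.trans_le hMr
  have hden : ((x : ℝ) ^ 2 + (y : ℝ) ^ 2) ^ γ = r ^ (2 * γ) := by
    rw [rpow_mul hr.le, rpow_two, sq_sqrt (by positivity)]
  calc _ = |(x : ℝ)| ^ α * |(y : ℝ)| ^ β / r ^ (2 * γ) := by
        rw [norm_div, norm_mul, norm_pow, norm_pow, hden, Real.norm_eq_abs, Real.norm_eq_abs,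
          Real.norm_eq_abs, abs_of_pos (rpow_pos_of_pos hr _)]
    _ ≤ r ^ α * r ^ β / r ^ (2 * γ) := by gcongr
    _ = r ^ (-(2 * γ - α - β)) := by
        rw [← rpow_natCast, ← rpow_natCast, ← rpow_add hr, ← rpow_sub hr]
        ring_nf
    _ ≤ M ^ (-(2 * γ - α - β)) := rpow_le_rpow_of_nonpos hM hMr (by linarith)

lemma int_sq_add_sq_pos {p : ℤ × ℤ} (hp : p ≠ (0, 0)) :
    0 < (p.1 : ℝ) ^ 2 + (p.2 : ℝ) ^ 2 := by
  have : (p.1 : ℝ) ≠ 0 ∨ (p.2 : ℝ) ≠ 0 := by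
    contrapose! hp
    exact Prod.ext (by exact_mod_cast hp.1) (by exact_mod_cast hp.2)
  rcases this with h | h <;> positivity

theorem integral_tsum_thetaTerm_mul_thetaTerm (b : ℕ) {s : ℝ} (hs : 2 * b + 1 < s) :
    ∫ u in Ioi 0, ∑' p : {p : ℤ × ℤ // p ≠ (0, 0)},
        u ^ (s - 1) * (thetaTerm b p.1.1 u * thetaTerm b p.1.2 u)
      = π ^ (2 * (b : ℝ) - s) * Gamma s * Zdd (2 * b) (2 * b) s := by
  have hs0 : 0 < s := by linarith [b.cast_nonneg (α := ℝ)]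
  have hxy (p : {p : ℤ × ℤ // p ≠ (0, 0)}) := int_sq_add_sq_pos p.2
  have hint (p : {p : ℤ × ℤ // p ≠ (0, 0)}) :=
    integral_rpow_mul_thetaTerm_mul_thetaTerm b hs0 (hxy p)
  have hnonneg : ∀ (p : {p : ℤ × ℤ // p ≠ (0, 0)}) (u : ℝ), u ∈ Ioi 0 →
      0 ≤ u ^ (s - 1) * (thetaTerm b p.1.1 u * thetaTerm b p.1.2 u) := fun p u hu => by
    rw [thetaTerm_mul_thetaTerm]
    have := (even_two_mul b).pow_nonneg (p.1.1 : ℝ)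
    have := (even_two_mul b).pow_nonneg (p.1.2 : ℝ)
    have := rpow_nonneg (le_of_lt hu) (s - 1)
    positivity
  rw [← integral_tsum_of_summable_integral_norm, Zdd, ← tsum_mul_left]
  · exact tsum_congr hint
  · exact fun p => integrableOn_rpow_mul_thetaTerm_mul_thetaTerm b hs0 (hxy p)
  · refine ((summable_Zdd_term (α := 2 * b) (β := 2 * b) (by push_cast; linarith)).mul_left
      (π ^ (2 * (b : ℝ) - s) * Gamma s)).congr fun p => ?_
    rw [← hint, setIntegral_congr_fun measurableSet_Ioi
      fun u hu => Real.norm_of_nonneg (hnonneg p u hu)]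

/-- For a nonnegative integer `b` and real `a > 1`,
`Γ(a+2b) Z(2b,2b;a+2b) = π^a ∫₀^∞ u^{a+2b-1} ((θ^{(b)}(u))² - 𝟙{b=0}) du`. -/
theorem Ztil_eq_theta_integral (b : ℕ) (a : ℝ) (ha : 1 < a) :
    Real.Gamma (a + 2 * b) * Zdd (2 * b) (2 * b) (a + 2 * b)
      = Real.pi ^ a *
        ∫ u in Set.Ioi (0 : ℝ),
          u ^ (a + 2 * (b : ℝ) - 1) *
            ((iteratedDeriv b jTheta u) ^ 2 - if b = 0 then 1 else 0) := by
  have integrand : ∀ u ∈ Ioi (0 : ℝ),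
      u ^ (a + 2 * (b : ℝ) - 1) * ((iteratedDeriv b jTheta u) ^ 2 - if b = 0 then 1 else 0)
        = ∑' p : {p : ℤ × ℤ // p ≠ (0, 0)},
            u ^ (a + 2 * (b : ℝ) - 1) * (thetaTerm b p.1.1 u * thetaTerm b p.1.2 u) := by
    intro u hu
    have h := tsum_sq_sub_sq_eq_tsum_ne (summable_norm_thetaTerm b hu) 0
    rw [Int.cast_zero, thetaTerm_zero_sq] at h
    rw [iteratedDeriv_jTheta b hu, h, tsum_mul_left]
  rw [setIntegral_congr_fun measurableSet_Ioi integrand,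
    integral_tsum_thetaTerm_mul_thetaTerm b (by linarith),
    show 2 * (b : ℝ) - (a + 2 * b) = -a by ring,
    ← mul_assoc, ← mul_assoc, ← rpow_add pi_pos, add_neg_cancel, rpow_zero, one_mul]
end

section
/- For every real s > 2, ∫₀^∞ u^{s/2+1} θ'(u)² du = 1/(2(s−2)) + ∫₁^∞ u^{s/2+1} θ'(u)² du + ∫₁^∞ u^{−s/2+1} θ(u) θ'(u) du + ∫₁^∞ u^{−s/2+2} θ'(u)² du + (1/4) ∫₁^∞ u^{−s/2} (θ(u)² − 1) du. -/
/-!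
Split the integral at `u = 1` and substitute `u = 1/x` on `(0, 1)`. Differentiating the
reciprocity law `θ(1/x) = √x θ(x)` gives `θ'(1/x) = -x² (θ(x)/(2√x) + √x θ'(x))`, so the
transformed integrand `x^{-s/2-3} θ'(1/x)²` expands into
`x^{-s/2+1} θθ' + x^{-s/2+2} θ'² + x^{-s/2} θ²/4`, and writing `θ² = (θ² - 1) + 1` splits off
`¼ ∫₁^∞ x^{-s/2} dx = 1/(2(s-2))`. All integrals over `(1, ∞)` converge because `θ - 1` and `θ'`
decay like `e^{-πu}`.
-/

open MeasureTheory

open Set Filter Asymptotics Real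

lemma hasSum_jTheta {u : ℝ} (hu : 0 < u) :
    HasSum (fun n : ℤ => rexp (-π * n ^ 2 * u)) (jTheta u) := by
  have h := HurwitzZeta.hasSum_int_evenKernel 0 hu
  simp only [add_zero] at h
  exact h.summable.hasSum

lemma jTheta_eq_evenKernel {u : ℝ} (hu : 0 < u) : jTheta u = HurwitzZeta.evenKernel 0 u :=
  (hasSum_jTheta hu).unique (by simpa using HurwitzZeta.hasSum_int_evenKernel 0 hu)

lemma jTheta_inv {x : ℝ} (hx : 0 < x) : jTheta x⁻¹ = √x * jTheta x := by
  rw [jTheta_eq_evenKernel hx, jTheta_eq_evenKernel (inv_pos.2 hx),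
    HurwitzZeta.evenKernel_functional_equation, ← HurwitzZeta.evenKernel_eq_cosKernel_of_zero,
    inv_rpow hx.le, one_div x⁻¹, inv_inv, one_div (x ^ _)⁻¹, inv_inv, ← sqrt_eq_rpow]

lemma summable_sq_mul_exp_neg_pi_mul_sq {t : ℝ} (ht : 0 < t) :
    Summable fun n : ℤ => (n : ℝ) ^ 2 * rexp (-π * n ^ 2 * t) := by
  refine (summable_pow_mul_jacobiTheta₂_term_bound 0 ht 2).congr fun n => ?_
  rw [Int.cast_abs, sq_abs]
  ring_nf

lemma hasDerivAt_jTheta {u : ℝ} (hu : 0 < u) :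
    HasDerivAt jTheta (∑' n : ℤ, -π * n ^ 2 * rexp (-π * n ^ 2 * u)) u := by
  show HasDerivAt (fun u => ∑' n : ℤ, rexp (-π * n ^ 2 * u)) _ u
  refine hasDerivAt_tsum_of_isPreconnected (g := fun (n : ℤ) u => rexp (-π * n ^ 2 * u))
    (g' := fun (n : ℤ) u => -π * n ^ 2 * rexp (-π * n ^ 2 * u)) (t := Ioi (u / 2))
    ((summable_sq_mul_exp_neg_pi_mul_sq (half_pos hu)).mul_left π) isOpen_Ioi isPreconnected_Ioi
    (fun n y _ => ?_) (fun n y hy => ?_) (half_lt_self hu) (hasSum_jTheta hu).summable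
    (half_lt_self hu)
  · have h := ((hasDerivAt_id y).const_mul (-π * n ^ 2)).exp
    simp only [id, mul_one] at h
    exact h.congr_deriv (mul_comm _ _)
  · simp only [norm_mul, norm_neg, norm_pow, norm_eq_abs, abs_of_pos pi_pos, sq_abs,
      abs_of_pos (exp_pos _), ← mul_assoc]
    refine mul_le_mul_of_nonneg_left (exp_le_exp.2 ?_) (by positivity)
    nlinarith [mul_le_mul_of_nonneg_left (le_of_lt hy) (by positivity : 0 ≤ π * n ^ 2)]

lemma deriv_jTheta {u : ℝ} (hu : 0 < u) :
    deriv jTheta u = ∑' n : ℤ, -π * n ^ 2 * rexp (-π * n ^ 2 * u) :=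
  (hasDerivAt_jTheta hu).deriv

lemma continuousOn_jTheta : ContinuousOn jTheta (Ioi 0) :=
  fun _ hx => (hasDerivAt_jTheta hx).continuousAt.continuousWithinAt

lemma deriv_jTheta_inv {x : ℝ} (hx : 0 < x) :
    deriv jTheta x⁻¹ = -(x ^ 2 * (jTheta x / (2 * √x) + √x * deriv jTheta x)) := by
  have hchain : HasDerivAt (fun y => jTheta y⁻¹) (deriv jTheta x⁻¹ * -(x ^ 2)⁻¹) x :=
    (hasDerivAt_jTheta (inv_pos.2 hx)).deriv ▸ (hasDerivAt_jTheta (inv_pos.2 hx)).comp x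
      (hasDerivAt_inv hx.ne')
  have hprod : HasDerivAt (fun y => jTheta y⁻¹)
      (1 / (2 * √x) * jTheta x + √x * deriv jTheta x) x := by
    refine ((hasDerivAt_sqrt hx.ne').mul (hasDerivAt_jTheta hx).differentiableAt.hasDerivAt)
      |>.congr_of_eventuallyEq ?_
    filter_upwards [Ioi_mem_nhds hx] with y hy using jTheta_inv hy
  have := hchain.unique hprod
  field_simp at this ⊢
  linarith

lemma isBigO_tsum_mul_exp_neg_pi_mul_sq {c : ℤ → ℝ} (hc0 : c 0 = 0)
    (hc : Summable fun n : ℤ => c n * rexp (-π * n ^ 2)) :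
    (fun u => ∑' n : ℤ, c n * rexp (-π * n ^ 2 * u)) =O[𝓟 (Ioi 1)] fun u => rexp (-π * u) := by
  refine isBigO_principal.2 ⟨rexp π * ∑' n : ℤ, |c n * rexp (-π * n ^ 2)|, fun u hu => ?_⟩
  have hterm (n : ℤ) : ‖c n * rexp (-π * n ^ 2 * u)‖
      ≤ |c n * rexp (-π * n ^ 2)| * (rexp π * rexp (-π * u)) := by
    rcases eq_or_ne n 0 with rfl | hn
    · simp [hc0]
    rw [norm_eq_abs, abs_mul, abs_mul, abs_of_pos (exp_pos _), abs_of_pos (exp_pos _), ← exp_add,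
      mul_assoc |c n|, ← exp_add]
    refine mul_le_mul_of_nonneg_left (exp_le_exp.2 ?_) (abs_nonneg _)
    have hn2 : (1 : ℝ) ≤ (n : ℝ) ^ 2 :=
      (one_le_sq_iff_one_le_abs _).2 (by exact_mod_cast Int.one_le_abs hn)
    nlinarith [mul_le_mul_of_nonneg_left hn2
      (mul_nonneg pi_pos.le (sub_nonneg.2 (le_of_lt (mem_Ioi.1 hu))))]
  calc ‖∑' n : ℤ, c n * rexp (-π * n ^ 2 * u)‖
      ≤ (∑' n : ℤ, |c n * rexp (-π * n ^ 2)|) * (rexp π * rexp (-π * u)) :=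
        tsum_of_norm_bounded ((summable_abs_iff.2 hc).hasSum.mul_right _) hterm
    _ = _ := by rw [norm_of_nonneg (exp_pos _).le]; ring

lemma jTheta_sub_one_isBigO :
    (fun u => jTheta u - 1) =O[𝓟 (Ioi 1)] fun u => rexp (-π * u) := by
  let c : ℤ → ℝ := fun n => if n = 0 then 0 else 1
  have hsum : Summable fun n : ℤ => c n * rexp (-π * n ^ 2) := by
    refine .of_norm_bounded (by simpa using (hasSum_jTheta one_pos).summable) fun n => ?_
    by_cases hn : n = 0 <;> simp [c, hn]
  refine (isBigO_tsum_mul_exp_neg_pi_mul_sq (c := c) (by simp [c]) hsum).congr'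
    (eventuallyEq_principal.2 fun u hu => ?_) EventuallyEq.rfl
  refine (((hasSum_jTheta (one_pos.trans hu)).sub (hasSum_ite_eq 0 1)).congr_fun
    fun n => ?_).tsum_eq
  by_cases hn : n = 0 <;> simp [c, hn]

lemma deriv_jTheta_isBigO : deriv jTheta =O[𝓟 (Ioi 1)] fun u => rexp (-π * u) := by
  have hsum : Summable fun n : ℤ => -π * n ^ 2 * rexp (-π * n ^ 2) := by
    simpa [mul_assoc] using (summable_sq_mul_exp_neg_pi_mul_sq one_pos).mul_left (-π)
  exact (isBigO_tsum_mul_exp_neg_pi_mul_sq (by simp) hsum).congr'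
    (eventuallyEq_principal.2 fun u hu => (deriv_jTheta (one_pos.trans hu)).symm) EventuallyEq.rfl

lemma exp_neg_pi_mul_isBigO_one : (fun u => rexp (-π * u)) =O[𝓟 (Ioi 1)] fun _ => (1 : ℝ) :=
  isBigO_principal.2 ⟨1, fun u hu => by
    rw [norm_one, mul_one, norm_of_nonneg (exp_pos _).le, exp_le_one_iff]
    nlinarith [pi_pos, mem_Ioi.1 hu]⟩

lemma jTheta_isBigO_one : jTheta =O[𝓟 (Ioi 1)] fun _ => (1 : ℝ) :=
  ((jTheta_sub_one_isBigO.trans exp_neg_pi_mul_isBigO_one).add (isBigO_refl _ _)).congr_left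
    fun u => sub_add_cancel (jTheta u) 1

lemma deriv_jTheta_sq_isBigO :
    (fun u => deriv jTheta u ^ 2) =O[𝓟 (Ioi 1)] fun u => rexp (-π * u) :=
  (deriv_jTheta_isBigO.mul (deriv_jTheta_isBigO.trans exp_neg_pi_mul_isBigO_one)).congr
    (fun _ => (sq _).symm) fun _ => mul_one _

lemma jTheta_mul_deriv_jTheta_isBigO :
    (fun u => jTheta u * deriv jTheta u) =O[𝓟 (Ioi 1)] fun u => rexp (-π * u) :=
  (jTheta_isBigO_one.mul deriv_jTheta_isBigO).congr_right fun _ => one_mul _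

lemma jTheta_sq_sub_one_isBigO :
    (fun u => jTheta u ^ 2 - 1) =O[𝓟 (Ioi 1)] fun u => rexp (-π * u) :=
  (jTheta_sub_one_isBigO.mul (jTheta_isBigO_one.add (isBigO_refl (fun _ => (1 : ℝ)) _))).congr
    (fun _ => by ring) fun _ => mul_one _

lemma integrableOn_Ioi_one_rpow_mul_of_isBigO {f : ℝ → ℝ} {b : ℝ} (hb : 0 < b)
    (hfm : AEStronglyMeasurable f (volume.restrict (Ioi 1)))
    (hf : f =O[𝓟 (Ioi 1)] fun u => rexp (-b * u)) (a : ℝ) :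
    IntegrableOn (fun u => u ^ a * f u) (Ioi 1) := by
  obtain ⟨C, hC⟩ := isBigO_principal.1 hf
  have hdom : IntegrableOn (fun u => C * (u ^ |a| * rexp (-b * u))) (Ioi 1) := by
    have h := integrableOn_rpow_mul_exp_neg_mul_rpow (neg_one_lt_zero.trans_le (abs_nonneg a))
      one_pos hb
    simp only [rpow_one] at h
    exact (h.mono_set (Ioi_subset_Ioi zero_le_one)).const_mul C
  refine hdom.mono' ((measurable_id.pow_const a).aestronglyMeasurable.mul hfm) ?_
  filter_upwards [ae_restrict_mem measurableSet_Ioi] with u (hu : 1 < u)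
  have hua : 0 ≤ u ^ a := rpow_nonneg (zero_le_one.trans hu.le) a
  calc ‖u ^ a * f u‖ = u ^ a * ‖f u‖ := by rw [norm_mul, norm_of_nonneg hua]
    _ ≤ u ^ |a| * (C * rexp (-b * u)) := by
        refine mul_le_mul (rpow_le_rpow_of_exponent_le hu.le (le_abs_self a)) ?_ (norm_nonneg _)
          (hua.trans (rpow_le_rpow_of_exponent_le hu.le (le_abs_self a)))
        simpa [norm_of_nonneg (exp_pos _).le] using hC u hu
    _ = C * (u ^ |a| * rexp (-b * u)) := by ring

lemma aestronglyMeasurable_jTheta : AEStronglyMeasurable jTheta (volume.restrict (Ioi 1)) :=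
  (continuousOn_jTheta.mono (Ioi_subset_Ioi zero_le_one)).aestronglyMeasurable measurableSet_Ioi

lemma integrableOn_Ioi_one_rpow_mul_deriv_jTheta_sq (a : ℝ) :
    IntegrableOn (fun u => u ^ a * deriv jTheta u ^ 2) (Ioi 1) :=
  integrableOn_Ioi_one_rpow_mul_of_isBigO pi_pos
    ((measurable_deriv jTheta).pow_const 2).aestronglyMeasurable deriv_jTheta_sq_isBigO a

lemma integrableOn_Ioi_one_rpow_mul_jTheta_mul_deriv_jTheta (a : ℝ) :
    IntegrableOn (fun u => u ^ a * (jTheta u * deriv jTheta u)) (Ioi 1) :=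
  integrableOn_Ioi_one_rpow_mul_of_isBigO pi_pos
    (aestronglyMeasurable_jTheta.mul (measurable_deriv jTheta).aestronglyMeasurable)
    jTheta_mul_deriv_jTheta_isBigO a

lemma integrableOn_Ioi_one_rpow_mul_jTheta_sq_sub_one (a : ℝ) :
    IntegrableOn (fun u => u ^ a * (jTheta u ^ 2 - 1)) (Ioi 1) :=
  integrableOn_Ioi_one_rpow_mul_of_isBigO pi_pos
    ((aestronglyMeasurable_jTheta.pow 2).sub aestronglyMeasurable_const)
    jTheta_sq_sub_one_isBigO a

section InvSubstitution

variable {E : Type*} [NormedAddCommGroup E] [NormedSpace ℝ E]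

lemma image_inv_Ioi_one : (·⁻¹) '' Ioi (1 : ℝ) = Ioo 0 1 := by
  rw [image_inv_eq_inv, inv_Ioi₀ one_pos, inv_one]

lemma hasDerivWithinAt_inv_Ioi_one :
    ∀ x ∈ Ioi (1 : ℝ), HasDerivWithinAt (·⁻¹) (-(x ^ 2)⁻¹) (Ioi 1) x :=
  fun _ hx => (hasDerivAt_inv (zero_lt_one.trans hx).ne').hasDerivWithinAt

lemma integrableOn_Ioo_zero_one_iff_comp_inv {g : ℝ → E} :
    IntegrableOn g (Ioo 0 1) ↔ IntegrableOn (fun x => (x ^ 2)⁻¹ • g x⁻¹) (Ioi 1) := by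
  rw [← image_inv_Ioi_one, integrableOn_image_iff_integrableOn_abs_deriv_smul measurableSet_Ioi
    hasDerivWithinAt_inv_Ioi_one inv_injective.injOn]
  simp only [abs_neg, abs_inv, abs_pow, sq_abs]

lemma integral_Ioo_zero_one_eq_integral_comp_inv (g : ℝ → E) :
    ∫ u in Ioo 0 1, g u = ∫ x in Ioi 1, (x ^ 2)⁻¹ • g x⁻¹ := by
  rw [← image_inv_Ioi_one, integral_image_eq_integral_abs_deriv_smul measurableSet_Ioi
    hasDerivWithinAt_inv_Ioi_one inv_injective.injOn]
  simp only [abs_neg, abs_inv, abs_pow, sq_abs]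

end InvSubstitution

lemma inv_sq_mul_rpow_mul_deriv_jTheta_inv_sq (s : ℝ) {x : ℝ} (hx : 0 < x) :
    (x ^ 2)⁻¹ * (x⁻¹ ^ (s / 2 + 1) * deriv jTheta x⁻¹ ^ 2)
      = x ^ (-s / 2 + 1) * (jTheta x * deriv jTheta x) + x ^ (-s / 2 + 2) * deriv jTheta x ^ 2
        + 1 / 4 * (x ^ (-s / 2) * (jTheta x ^ 2 - 1)) + 1 / 4 * x ^ (-s / 2) := by
  have hpow (k : ℕ) : x ^ (-s / 2 + k) = x ^ (-(s / 2 + 1)) * x ^ (k + 1) := by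
    rw [← rpow_add_natCast hx.ne']
    push_cast
    ring_nf
  have h0 := hpow 0
  have h1 := hpow 1
  have h2 := hpow 2
  push_cast at h0 h1 h2
  rw [add_zero] at h0
  rw [deriv_jTheta_inv hx, inv_rpow hx.le, ← rpow_neg hx.le, h0, h1, h2]
  have hsqrt : √x ^ 2 = x := sq_sqrt hx.le
  rw [neg_sq, mul_pow, add_sq, div_pow, mul_pow, mul_pow, hsqrt]
  field_simp
  ring

/-- For every real `s > 2`,
`∫₀^∞ u^{s/2+1} θ'(u)² du = 1/(2(s-2)) + ∫₁^∞ u^{s/2+1} θ'(u)² du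
  + ∫₁^∞ u^{-s/2+1} θ(u)θ'(u) du + ∫₁^∞ u^{-s/2+2} θ'(u)² du
  + (1/4)∫₁^∞ u^{-s/2}(θ(u)²-1) du`. -/
theorem I2_split (s : ℝ) (hs : 2 < s) :
    (∫ u in Set.Ioi (0 : ℝ), u ^ (s / 2 + 1) * (deriv jTheta u) ^ 2)
      = 1 / (2 * (s - 2))
        + (∫ u in Set.Ioi (1 : ℝ), u ^ (s / 2 + 1) * (deriv jTheta u) ^ 2)
        + (∫ u in Set.Ioi (1 : ℝ), u ^ (-s / 2 + 1) * (jTheta u * deriv jTheta u))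
        + (∫ u in Set.Ioi (1 : ℝ), u ^ (-s / 2 + 2) * (deriv jTheta u) ^ 2)
        + (1 / 4) * ∫ u in Set.Ioi (1 : ℝ), u ^ (-s / 2) * ((jTheta u) ^ 2 - 1) := by
  have hexp : -s / 2 < -1 := by linarith
  have hconst : 1 / 4 * (-1 / (-s / 2 + 1)) = 1 / (2 * (s - 2)) := by
    rw [show -s / 2 + 1 = -((s - 2) / 2) by ring]
    field_simp
    norm_num
  have hA := integrableOn_Ioi_one_rpow_mul_jTheta_mul_deriv_jTheta (-s / 2 + 1)
  have hB := integrableOn_Ioi_one_rpow_mul_deriv_jTheta_sq (-s / 2 + 2)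
  have hC := (integrableOn_Ioi_one_rpow_mul_jTheta_sq_sub_one (-s / 2)).const_mul (1 / 4)
  have hD := (integrableOn_Ioi_rpow_of_lt hexp one_pos).const_mul (1 / 4)
  have hsubst : EqOn (fun x => (x ^ 2)⁻¹ • (x⁻¹ ^ (s / 2 + 1) * deriv jTheta x⁻¹ ^ 2))
      (fun x => x ^ (-s / 2 + 1) * (jTheta x * deriv jTheta x) + x ^ (-s / 2 + 2) * deriv jTheta x ^ 2
        + 1 / 4 * (x ^ (-s / 2) * (jTheta x ^ 2 - 1)) + 1 / 4 * x ^ (-s / 2)) (Ioi 1) :=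
    fun x hx => inv_sq_mul_rpow_mul_deriv_jTheta_inv_sq s (zero_lt_one.trans hx)
  have h01 : IntegrableOn (fun u => u ^ (s / 2 + 1) * deriv jTheta u ^ 2) (Ioo 0 1) :=
    integrableOn_Ioo_zero_one_iff_comp_inv.2
      ((((hA.add hB).add hC).add hD).congr_fun hsubst.symm measurableSet_Ioi)
  rw [← Ioc_union_Ioi_eq_Ioi zero_le_one, setIntegral_union (Ioc_disjoint_Ioi le_rfl)
    measurableSet_Ioi (h01.congr_set_ae Ioo_ae_eq_Ioc.symm)
    (integrableOn_Ioi_one_rpow_mul_deriv_jTheta_sq _), integral_Ioc_eq_integral_Ioo,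
    integral_Ioo_zero_one_eq_integral_comp_inv, setIntegral_congr_fun measurableSet_Ioi hsubst,
    integral_add ?_ hD, integral_add ?_ hC, integral_add hA hB, integral_const_mul,
    integral_const_mul, integral_Ioi_rpow_of_lt hexp one_pos, one_rpow]
  · rw [hconst]
    ring
  · exact hA.add hB
  · exact (hA.add hB).add hC
end

section
/- ∫₁^∞ u^{−1/2}(θ(u)² − 1) du = 4π^{−1/2} [ ∑_{n₁=1}^∞ ∑_{n₂=1}^∞ (n₁²+n₂²)^{−1/2} Γ(1/2, π(n₁²+n₂²)) + ∑_{n=1}^∞ n^{−1} Γ(1/2, πn²) ], and both double and single series on the right converge absolutely. -/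
open MeasureTheory

/-- The incomplete gamma function of the second kind
`Γ(z,p) = ∫_p^∞ t^{z-1} e^{-t} dt`. -/
noncomputable def iGamma (z p : ℝ) : ℝ :=
  ∫ t in Set.Ioi p, t ^ (z - 1) * Real.exp (-t)

/-!
With `S(u) = ∑_{n ≥ 1} e^{-πn²u}` we have `θ = 1 + 2S`, so `θ² - 1 = 4S + 4S²` is `4` times a sum
of `e^{-πku}`, where `k` runs over `n₁² + n₂²` for `n₁, n₂ ≥ 1` and over `n²` for `n ≥ 1`. The
terms are nonnegative, so the integral can be taken termwise, and the substitution `t = πku` gives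
`∫₁^∞ u^{-1/2} e^{-πku} du = (πk)^{-1/2} Γ(1/2, πk)`. Absolute convergence comes from the bound
`k^{-1/2} Γ(1/2, πk) ≤ e^{-πk}` for `k ≥ 1`.
-/

open Set Real

section IncompleteGamma

variable {z p : ℝ}

lemma iGamma_nonneg (z : ℝ) (hp : 0 ≤ p) : 0 ≤ iGamma z p :=
  setIntegral_nonneg measurableSet_Ioi fun t ht ↦ by
    have : 0 < t := hp.trans_lt ht
    positivity

lemma iGamma_le_exp_neg (hz : z ≤ 1) (hp : 1 ≤ p) : iGamma z p ≤ exp (-p) := by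
  rw [iGamma, ← integral_exp_neg_Ioi]
  refine integral_mono_of_nonneg ?_ (integrableOn_exp_neg_Ioi p) ?_
  · filter_upwards [ae_restrict_mem measurableSet_Ioi] with t ht
    have : 0 < t := by linarith [mem_Ioi.mp ht]
    positivity
  · filter_upwards [ae_restrict_mem measurableSet_Ioi] with t ht
    have : t ^ (z - 1) ≤ 1 :=
      rpow_le_one_of_one_le_of_nonpos (hp.trans (mem_Ioi.mp ht).le) (by linarith)
    exact mul_le_of_le_one_left (exp_nonneg _) this

lemma rpow_neg_mul_iGamma_le_exp_neg {k : ℝ} (hz₀ : 0 ≤ z) (hz₁ : z ≤ 1) (hk : 1 ≤ k)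
    (hp : 1 ≤ p) : k ^ (-z) * iGamma z p ≤ exp (-p) :=
  (mul_le_of_le_one_left (iGamma_nonneg z (zero_le_one.trans hp))
    (rpow_le_one_of_one_le_of_nonpos hk (by linarith))).trans (iGamma_le_exp_neg hz₁ hp)

lemma summable_rpow_neg_mul_iGamma_pi_mul {ι : Type*} {k : ι → ℝ} (hz₀ : 0 ≤ z) (hz₁ : z ≤ 1)
    (hk : ∀ i, 1 ≤ k i) (hs : Summable fun i ↦ exp (-(π * k i))) :
    Summable fun i ↦ k i ^ (-z) * iGamma z (π * k i) := by
  have hπk (i : ι) : 1 ≤ π * k i := by nlinarith [pi_gt_three, hk i]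
  refine hs.of_nonneg_of_le (fun i ↦ ?_) fun i ↦
    rpow_neg_mul_iGamma_le_exp_neg hz₀ hz₁ (hk i) (hπk i)
  have := iGamma_nonneg z (zero_le_one.trans (hπk i))
  have := zero_le_one.trans (hk i)
  positivity

lemma integral_rpow_mul_exp_neg_mul_Ioi {a c : ℝ} (ha : 0 ≤ a) (hc : 0 < c) :
    ∫ u in Ioi a, u ^ (z - 1) * exp (-(c * u)) = c ^ (-z) * iGamma z (c * a) := by
  have hscale : ∀ u ∈ Ioi a, u ^ (z - 1) * exp (-(c * u)) =
      c ^ (1 - z) * ((c * u) ^ (z - 1) * exp (-(c * u))) := fun u hu ↦ by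
    rw [mul_rpow hc.le (ha.trans (mem_Ioi.mp hu).le), ← mul_assoc, ← mul_assoc,
      ← rpow_add hc]
    simp
  rw [setIntegral_congr_fun measurableSet_Ioi hscale, integral_const_mul,
    integral_comp_mul_left_Ioi (fun t ↦ t ^ (z - 1) * exp (-t)) a hc, smul_eq_mul, iGamma,
    ← mul_assoc, ← rpow_neg_one, ← rpow_add hc]
  ring_nf

lemma integrableOn_rpow_mul_exp_neg_mul_Ioi {a c : ℝ} (hz : 0 < z) (ha : 0 ≤ a) (hc : 0 < c) :
    IntegrableOn (fun u ↦ u ^ (z - 1) * exp (-(c * u))) (Ioi a) := by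
  have hGamma : IntegrableOn (fun t ↦ t ^ (z - 1) * exp (-t)) (Ioi (c * a)) := by
    refine ((GammaIntegral_convergent hz).mono_set (Ioi_subset_Ioi (by positivity))).congr_fun
      (fun t _ ↦ mul_comm _ _) measurableSet_Ioi
  rw [← integrableOn_Ioi_comp_mul_left_iff _ _ hc] at hGamma
  refine IntegrableOn.congr_fun (hGamma.const_mul (c ^ (1 - z))) (fun u hu ↦ ?_) measurableSet_Ioi
  rw [mul_rpow hc.le (ha.trans (mem_Ioi.mp hu).le), ← mul_assoc, ← mul_assoc, ← rpow_add hc]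
  simp

lemma integral_rpow_mul_tsum_exp_neg_mul {ι : Type*} [Countable ι] {a : ℝ} {c : ι → ℝ}
    (hz : 0 < z) (ha : 0 ≤ a) (hc : ∀ i, 0 < c i)
    (hs : Summable fun i ↦ c i ^ (-z) * iGamma z (c i * a)) :
    ∫ u in Ioi a, u ^ (z - 1) * ∑' i, exp (-(c i * u)) =
      ∑' i, c i ^ (-z) * iGamma z (c i * a) := by
  simp_rw [← tsum_mul_left]
  rw [← integral_tsum_of_summable_integral_norm
    (fun i ↦ integrableOn_rpow_mul_exp_neg_mul_Ioi hz ha (hc i))]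
  · exact tsum_congr fun i ↦ integral_rpow_mul_exp_neg_mul_Ioi ha (hc i)
  · refine hs.congr fun i ↦ ?_
    rw [← integral_rpow_mul_exp_neg_mul_Ioi ha (hc i)]
    refine setIntegral_congr_fun measurableSet_Ioi fun u hu ↦ ?_
    have : 0 < u := ha.trans_lt hu
    exact (norm_of_nonneg (by positivity)).symm

end IncompleteGamma

lemma summable_exp_neg_pi_mul_sq {u : ℝ} (hu : 0 < u) :
    Summable fun n : ℤ ↦ exp (-π * n ^ 2 * u) := by
  simpa using (HurwitzZeta.hasSum_int_evenKernel 0 hu).summable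

lemma jTheta_eq_one_add_two_mul_tsum_pnat {u : ℝ} (hu : 0 < u) :
    jTheta u = 1 + 2 * ∑' n : ℕ+, exp (-π * n ^ 2 * u) := by
  rw [jTheta, tsum_int_eq_zero_add_two_mul_tsum_pnat (fun n ↦ by simp)
    (summable_exp_neg_pi_mul_sq hu)]
  simp

def latticeSqNorm : ℕ+ × ℕ+ ⊕ ℕ+ → ℝ :=
  Sum.elim (fun q ↦ (q.1 : ℝ) ^ 2 + (q.2 : ℝ) ^ 2) (fun n ↦ (n : ℝ) ^ 2)

lemma one_le_latticeSqNorm (i : ℕ+ × ℕ+ ⊕ ℕ+) : 1 ≤ latticeSqNorm i := by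
  have h (n : ℕ+) : (1 : ℝ) ≤ (n : ℝ) ^ 2 := one_le_pow₀ (Nat.one_le_cast.mpr n.pos)
  rcases i with ⟨m, n⟩ | n
  · exact (h m).trans (le_add_of_nonneg_right (sq_nonneg _))
  · exact h n

lemma summable_exp_neg_pi_mul_pnat_sq {u : ℝ} (hu : 0 < u) :
    Summable fun n : ℕ+ ↦ exp (-π * n ^ 2 * u) := by
  refine ((summable_exp_neg_pi_mul_sq hu).comp_injective
    (Nat.cast_injective.comp PNat.coe_injective)).congr fun n ↦ ?_
  simp

lemma hasSum_exp_neg_pi_mul_latticeSqNorm {u : ℝ} (hu : 0 < u) :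
    HasSum (fun i ↦ exp (-(π * latticeSqNorm i * u))) ((jTheta u ^ 2 - 1) / 4) := by
  set e : ℕ+ → ℝ := fun n ↦ exp (-π * n ^ 2 * u)
  have he : Summable e := summable_exp_neg_pi_mul_pnat_sq hu
  have he' : Summable fun n ↦ ‖e n‖ := by simpa [e] using he
  have hprod (q : ℕ+ × ℕ+) : e q.1 * e q.2 = exp (-(π * latticeSqNorm (.inl q) * u)) := by
    simp only [e, latticeSqNorm, Sum.elim_inl, ← exp_add]
    ring_nf
  have hquad : HasSum (fun q ↦ exp (-(π * latticeSqNorm (.inl q) * u))) ((∑' n, e n) ^ 2) := by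
    rw [sq, tsum_mul_tsum_of_summable_norm he' he', tsum_congr hprod]
    exact ((summable_mul_of_summable_norm (R := ℝ) he' he').congr hprod).hasSum
  have haxis : HasSum (fun n ↦ exp (-(π * latticeSqNorm (.inr n) * u))) (∑' n, e n) := by
    refine he.hasSum.congr_fun fun n ↦ ?_
    simp only [e, latticeSqNorm, Sum.elim_inr, neg_mul]
  have := HasSum.sum (f := fun i ↦ exp (-(π * latticeSqNorm i * u))) hquad haxis
  rw [jTheta_eq_one_add_two_mul_tsum_pnat hu]
  convert this using 1
  ring

lemma summable_latticeSqNorm_rpow_neg_mul_iGamma {z : ℝ} (hz₀ : 0 ≤ z) (hz₁ : z ≤ 1) :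
    Summable fun i ↦ latticeSqNorm i ^ (-z) * iGamma z (π * latticeSqNorm i) :=
  summable_rpow_neg_mul_iGamma_pi_mul hz₀ hz₁ one_le_latticeSqNorm
    (by simpa using (hasSum_exp_neg_pi_mul_latticeSqNorm one_pos).summable)

lemma integral_rpow_mul_jTheta_sq_sub_one {z : ℝ} (hz₀ : 0 < z) (hz₁ : z ≤ 1) :
    ∫ u in Ioi 1, u ^ (z - 1) * (jTheta u ^ 2 - 1) =
      4 * π ^ (-z) * ∑' i, latticeSqNorm i ^ (-z) * iGamma z (π * latticeSqNorm i) := by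
  have hℓ (i) : 0 < latticeSqNorm i := zero_lt_one.trans_le (one_le_latticeSqNorm i)
  have hsum := summable_latticeSqNorm_rpow_neg_mul_iGamma hz₀.le hz₁
  have hfactor (i) : (π * latticeSqNorm i) ^ (-z) * iGamma z (π * latticeSqNorm i * 1) =
      π ^ (-z) * (latticeSqNorm i ^ (-z) * iGamma z (π * latticeSqNorm i)) := by
    rw [mul_one, mul_rpow pi_pos.le (hℓ i).le, mul_assoc]
  calc ∫ u in Ioi 1, u ^ (z - 1) * (jTheta u ^ 2 - 1)
      = 4 * ∫ u in Ioi 1, u ^ (z - 1) * ∑' i, exp (-(π * latticeSqNorm i * u)) := by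
        rw [← integral_const_mul]
        refine setIntegral_congr_fun measurableSet_Ioi fun u hu ↦ ?_
        rw [(hasSum_exp_neg_pi_mul_latticeSqNorm (zero_lt_one.trans hu)).tsum_eq]
        ring
    _ = 4 * ∑' i, (π * latticeSqNorm i) ^ (-z) * iGamma z (π * latticeSqNorm i * 1) := by
        rw [integral_rpow_mul_tsum_exp_neg_mul hz₀ zero_le_one (fun i ↦ mul_pos pi_pos (hℓ i))
          ((hsum.mul_left (π ^ (-z))).congr fun i ↦ (hfactor i).symm)]
    _ = 4 * π ^ (-z) * ∑' i, latticeSqNorm i ^ (-z) * iGamma z (π * latticeSqNorm i) := by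
        rw [tsum_congr hfactor, tsum_mul_left, mul_assoc]

/-- `∫₁^∞ u^{-1/2}(θ(u)²-1) du` equals
`4π^{-1/2}[∑_{n₁,n₂≥1} (n₁²+n₂²)^{-1/2} Γ(1/2, π(n₁²+n₂²)) + ∑_{n≥1} n^{-1} Γ(1/2, πn²)]`,
and both series on the right converge absolutely. -/
theorem L_eq_incomplete_gamma :
    Summable (fun q : ℕ+ × ℕ+ =>
      |((q.1 : ℝ) ^ 2 + (q.2 : ℝ) ^ 2) ^ (-(1 : ℝ) / 2) *
        iGamma (1 / 2) (Real.pi * ((q.1 : ℝ) ^ 2 + (q.2 : ℝ) ^ 2))|) ∧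
    Summable (fun n : ℕ+ => |(n : ℝ)⁻¹ * iGamma (1 / 2) (Real.pi * (n : ℝ) ^ 2)|) ∧
    (∫ u in Set.Ioi (1 : ℝ), u ^ (-(1 : ℝ) / 2) * ((jTheta u) ^ 2 - 1))
      = 4 * Real.pi ^ (-(1 : ℝ) / 2) *
        ((∑' q : ℕ+ × ℕ+,
            ((q.1 : ℝ) ^ 2 + (q.2 : ℝ) ^ 2) ^ (-(1 : ℝ) / 2) *
              iGamma (1 / 2) (Real.pi * ((q.1 : ℝ) ^ 2 + (q.2 : ℝ) ^ 2)))
          + ∑' n : ℕ+, (n : ℝ)⁻¹ * iGamma (1 / 2) (Real.pi * (n : ℝ) ^ 2)) := by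
  have hsum := summable_latticeSqNorm_rpow_neg_mul_iGamma (z := 1 / 2) (by norm_num) (by norm_num)
  have hquad := hsum.comp_injective Sum.inl_injective
  have haxis := hsum.comp_injective Sum.inr_injective
  have hintegral := integral_rpow_mul_jTheta_sq_sub_one (z := 1 / 2) (by norm_num) (by norm_num)
  rw [Summable.tsum_sum hquad haxis, show (1 / 2 : ℝ) - 1 = -(1 / 2) by norm_num] at hintegral
  have hsq_rpow (n : ℕ+) : ((n : ℝ) ^ 2) ^ (-(1 / 2 : ℝ)) = (n : ℝ)⁻¹ := by
    rw [rpow_neg (sq_nonneg _), ← sqrt_eq_rpow, sqrt_sq (Nat.cast_nonneg _)]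
  simp only [Function.comp_def, latticeSqNorm, Sum.elim_inl, Sum.elim_inr, hsq_rpow]
    at hquad haxis hintegral
  rw [show -(1 : ℝ) / 2 = -(1 / 2) by ring]
  exact ⟨hquad.abs, haxis.abs, hintegral⟩
end
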